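/- Let 0 = r_0 < r_1 < r_2 < ... with r_s → ∞ and ∑ 1/r_i = ∞. Fix k with 0 ≤ k, and for i and m define η^{(k)}_i(Λ_m) = ∏_{j=i+k+1}^m (1 - (r_{k+1} - r_k)/(r_j - r_k)) for 1 ≤ i ≤ m-k-1, with η^{(k)}_0 = 0 and η^{(k)}_{m-k} = 1. Then as m → ∞, η^{(k)}_{i-k}(Λ_m) - (η^{(k+1)}_{i-(k+1)}(Λ_m))^{(r_{k+1}-r_k)/(r_{k+2}-r_{k+1})} → 0 uniformly in i (with the convention that terms with negative subscripts are 0). -/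

import Mathlib

/-!
Write `a j = etakFactor r (k + 1) j`, `b j = etakFactor r k j` and
`γ = (r (k+1) - r k) / (r (k+2) - r (k+1))`. For `i > k` both `η`'s are the tail products
`∏_{i < j ≤ m}` of these factors. Comparing logarithms via `1 - 1/y ≤ log y ≤ y - 1` gives
`a j ^ (γ + δ) ≤ b j ≤ a j ^ (γ - δ)` for all large `j`, and `P ^ (γ - δ) - P ^ (γ + δ) = O(δ)`
uniformly in `P ∈ [0, 1]`, which settles tails starting beyond some `K`. Tails starting before `K`
are dominated by those starting at `K`, and these tend to `0` because `∑ 1 / r j = ∞` forces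
`∏ (1 - c / (r j - r k)) ≤ exp (-c ∑ 1 / r j) → 0`.
-/

open Filter

/-- `η^{(k)}_i(Λ_m) = ∏_{j=i+k+1}^m (1 - (r_{k+1}-r_k)/(r_j - r_k))` for
`1 ≤ i ≤ m-k-1`, with `η^{(k)}_0 = 0` and `η^{(k)}_{m-k} = 1` (empty product). -/
noncomputable def etak (r : ℕ → ℝ) (k m i : ℕ) : ℝ :=
  if i = 0 then 0
  else ∏ j ∈ Finset.Ioc (i + k) m, (1 - (r (k + 1) - r k) / (r j - r k))

open Topology Finset

lemma rpow_sub_rpow_le_div {P s t : ℝ} (hP0 : 0 ≤ P) (hP1 : P ≤ 1) (hs : 0 < s) (hst : s ≤ t) :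
    P ^ s - P ^ t ≤ (t - s) / s := by
  rcases hP0.eq_or_lt with rfl | hP
  · rw [Real.zero_rpow hs.ne', Real.zero_rpow (by linarith), sub_self]
    exact div_nonneg (by linarith) hs.le
  set u := P ^ s with hu_def
  have hu : 0 < u := Real.rpow_pos_of_pos hP s
  have hlog_u : Real.log u = s * Real.log P := Real.log_rpow hP s
  have hsplit : P ^ t = u * P ^ (t - s) := by
    rw [hu_def, ← Real.rpow_add hP]; ring_nf
  have hlog_rpow : 1 - P ^ (t - s) ≤ -((t - s) * Real.log P) := by
    have := Real.log_le_sub_one_of_pos (Real.rpow_pos_of_pos hP (t - s))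
    rw [Real.log_rpow hP] at this
    linarith
  have hneg_mul_log : -(u * Real.log u) ≤ 1 := by
    have := Real.one_sub_inv_le_log_of_pos hu
    have : u * (1 - u⁻¹) ≤ u * Real.log u := mul_le_mul_of_nonneg_left this hu.le
    rw [mul_sub, mul_inv_cancel₀ hu.ne'] at this
    linarith
  rw [hsplit, le_div_iff₀ hs]
  calc (u - u * P ^ (t - s)) * s = u * (1 - P ^ (t - s)) * s := by ring
    _ ≤ u * (-((t - s) * Real.log P)) * s := by gcongr
    _ = (t - s) * -(u * Real.log u) := by rw [hlog_u]; ring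
    _ ≤ (t - s) * 1 := by gcongr
    _ = t - s := mul_one _

lemma abs_sub_rpow_le_of_rpow_le_of_le_rpow {P Q γ δ : ℝ} (hP0 : 0 ≤ P) (hP1 : P ≤ 1)
    (hδ : 0 < δ) (hδγ : δ < γ) (hlo : P ^ (γ + δ) ≤ Q) (hhi : Q ≤ P ^ (γ - δ)) :
    |Q - P ^ γ| ≤ δ / (γ - δ) := by
  rw [abs_sub_le_iff]
  constructor
  · have := rpow_sub_rpow_le_div hP0 hP1 (sub_pos.2 hδγ) (sub_le_self γ hδ.le)
    rw [sub_sub_cancel] at this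
    linarith
  · have := rpow_sub_rpow_le_div hP0 hP1 (hδ.trans hδγ) (le_add_of_nonneg_right hδ.le)
    rw [add_sub_cancel_left] at this
    have : δ / γ ≤ δ / (γ - δ) := div_le_div_of_nonneg_left hδ.le (by linarith) (by linarith)
    linarith

lemma abs_prod_sub_prod_rpow_le {ι : Type*} {s : Finset ι} {a b : ι → ℝ} {γ δ : ℝ}
    (hδ : 0 < δ) (hδγ : δ < γ) (ha : ∀ j ∈ s, a j ∈ Set.Icc (0 : ℝ) 1)
    (hab : ∀ j ∈ s, a j ^ (γ + δ) ≤ b j ∧ b j ≤ a j ^ (γ - δ)) :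
    |∏ j ∈ s, b j - (∏ j ∈ s, a j) ^ γ| ≤ δ / (γ - δ) := by
  have ha0 : ∀ j ∈ s, 0 ≤ a j := fun j hj => (ha j hj).1
  apply abs_sub_rpow_le_of_rpow_le_of_le_rpow (prod_nonneg ha0)
    (prod_le_one ha0 fun j hj => (ha j hj).2) hδ hδγ
  · rw [← Real.finsetProd_rpow s a ha0]
    exact prod_le_prod (fun j hj => Real.rpow_nonneg (ha0 j hj) _) fun j hj => (hab j hj).1
  · rw [← Real.finsetProd_rpow s a ha0]
    exact prod_le_prod (fun j hj => (Real.rpow_nonneg (ha0 j hj) _).trans (hab j hj).1)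
      fun j hj => (hab j hj).2

lemma tendsto_prod_one_sub_nhds_zero {ι α : Type*} {l : Filter α} {s : α → Finset ι}
    {x : ι → ℝ} (hx : ∀ n, ∀ j ∈ s n, x j ≤ 1)
    (hsum : Tendsto (fun n => ∑ j ∈ s n, x j) l atTop) :
    Tendsto (fun n => ∏ j ∈ s n, (1 - x j)) l (𝓝 0) := by
  have hexp : Tendsto (fun n => Real.exp (-∑ j ∈ s n, x j)) l (𝓝 0) :=
    Real.tendsto_exp_atBot.comp (tendsto_neg_atTop_atBot.comp hsum)
  refine squeeze_zero (fun n => prod_nonneg fun j hj => sub_nonneg.2 (hx n j hj))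
    (fun n => ?_) hexp
  rw [← sum_neg_distrib, Real.exp_sum]
  exact prod_le_prod (fun j hj => sub_nonneg.2 (hx n j hj))
    fun j _ => Real.one_sub_le_exp_neg (x j)

lemma tendsto_sum_Ioc_atTop {f : ℕ → ℝ}
    (hf : Tendsto (fun m => ∑ j ∈ Icc 1 m, f j) atTop atTop) (K : ℕ) :
    Tendsto (fun m => ∑ j ∈ Ioc K m, f j) atTop atTop := by
  refine (tendsto_atTop_add_const_right atTop (-∑ j ∈ Icc 1 K, f j) hf).congr' ?_
  filter_upwards [eventually_ge_atTop K] with m hm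
  have hIcc : ∀ n, Icc 1 n = Ioc 0 n := Icc_add_one_left_eq_Ioc 0
  rw [hIcc, hIcc, ← sum_Ioc_consecutive f (Nat.zero_le K) hm]
  ring

theorem exists_abs_prod_sub_prod_rpow_lt {a b : ℕ → ℝ} {γ : ℝ} {N : ℕ} (hγ : 0 < γ)
    (ha : ∀ j, N < j → a j ∈ Set.Icc (0 : ℝ) 1) (hb : ∀ j, N < j → b j ∈ Set.Icc (0 : ℝ) 1)
    (hab : ∀ δ ∈ Set.Ioo 0 γ, ∀ᶠ j in atTop, a j ^ (γ + δ) ≤ b j ∧ b j ≤ a j ^ (γ - δ))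
    (ha0 : ∀ K, N ≤ K → Tendsto (fun m => ∏ j ∈ Ioc K m, a j) atTop (𝓝 0))
    (hb0 : ∀ K, N ≤ K → Tendsto (fun m => ∏ j ∈ Ioc K m, b j) atTop (𝓝 0))
    {ε : ℝ} (hε : 0 < ε) :
    ∃ M, ∀ m ≥ M, ∀ i, N ≤ i → |∏ j ∈ Ioc i m, b j - (∏ j ∈ Ioc i m, a j) ^ γ| < ε := by
  obtain ⟨δ, hδ, hδε⟩ : ∃ δ ∈ Set.Ioo 0 γ, δ / (γ - δ) < ε := by
    refine ⟨γ * ε / (2 + ε), ⟨by positivity, ?_⟩, ?_⟩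
    · rw [div_lt_iff₀ (by positivity)]
      nlinarith
    · have hsub : γ - γ * ε / (2 + ε) = 2 * γ / (2 + ε) := by field_simp; ring
      rw [hsub, div_div_div_cancel_right₀ (by positivity)]
      field_simp
      linarith
  obtain ⟨K₀, hK₀⟩ := eventually_atTop.1 (hab δ hδ)
  set K := max K₀ N
  have hbK := (hb0 K (le_max_right _ _)).eventually (gt_mem_nhds hε)
  have haK := ((ha0 K (le_max_right _ _)).rpow_const (Or.inr hγ.le)).eventually
    (gt_mem_nhds (by rwa [Real.zero_rpow hγ.ne']))
  obtain ⟨M, hM⟩ := eventually_atTop.1 (hbK.and haK)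
  refine ⟨M, fun m hm i hi => ?_⟩
  rcases le_or_gt K i with hKi | hiK
  · refine (abs_prod_sub_prod_rpow_le hδ.1 hδ.2 (fun j hj => ha j ?_)
      (fun j hj => hK₀ j ?_)).trans_lt hδε <;> grind
  · -- for `i < K` both terms are dominated by the products from `K`, which are small
    have hdom : ∀ c : ℕ → ℝ, (∀ j, N < j → c j ∈ Set.Icc (0 : ℝ) 1) →
        0 ≤ ∏ j ∈ Ioc i m, c j ∧ ∏ j ∈ Ioc i m, c j ≤ ∏ j ∈ Ioc K m, c j := fun c hc =>
      ⟨prod_nonneg fun j hj => (hc j (by grind)).1,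
        prod_le_prod_of_subset_of_le_one (Ioc_subset_Ioc_left hiK.le)
          (fun j hj => (hc j (by grind)).1) fun j hj _ => (hc j (by grind)).2⟩
    obtain ⟨hQ₀, hQ⟩ := hdom b hb
    obtain ⟨hP₀, hP⟩ := hdom a ha
    have hPγ := Real.rpow_le_rpow hP₀ hP hγ.le
    have hPγ₀ := Real.rpow_nonneg hP₀ γ
    rw [abs_sub_lt_iff]
    constructor <;> linarith [hM m hm]

lemma one_sub_sub_div_sub {A B x : ℝ} (hx : x ≠ A) : 1 - (B - A) / (x - A) = (x - B) / (x - A) := by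
  field_simp [sub_ne_zero.2 hx]
  ring

lemma one_sub_div_rpow_le {A B C x : ℝ} (hAB : A < B) (hBC : B < C) (hCx : C < x) :
    (1 - (C - B) / (x - B)) ^ ((B - A) / (C - B)) ≤ 1 - (B - A) / (x - A) := by
  rw [one_sub_sub_div_sub (by linarith), one_sub_sub_div_sub (by linarith),
    Real.rpow_le_iff_le_log (by apply div_pos <;> linarith) (by apply div_pos <;> linarith)]
  calc (B - A) / (C - B) * Real.log ((x - C) / (x - B))
      ≤ (B - A) / (C - B) * ((x - C) / (x - B) - 1) :=
        mul_le_mul_of_nonneg_left (Real.log_le_sub_one_of_pos (by apply div_pos <;> linarith))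
          (div_nonneg (by linarith) (by linarith))
    _ = 1 - ((x - B) / (x - A))⁻¹ := by
        field_simp [(by linarith : x - B ≠ 0), (by linarith : C - B ≠ 0)]
        ring
    _ ≤ Real.log ((x - B) / (x - A)) :=
        Real.one_sub_inv_le_log_of_pos (by apply div_pos <;> linarith)

lemma one_sub_div_le_rpow {A B C x δ : ℝ} (hAB : A < B) (hBC : B < C) (hCx : C < x)
    (hδ : δ ≤ (B - A) / (C - B)) (hx : (B - A) / (C - B) * (C - A) ≤ δ * (x - A)) :
    1 - (B - A) / (x - A) ≤ (1 - (C - B) / (x - B)) ^ ((B - A) / (C - B) - δ) := by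
  rw [one_sub_sub_div_sub (by linarith), one_sub_sub_div_sub (by linarith),
    Real.le_rpow_iff_log_le (by apply div_pos <;> linarith) (by apply div_pos <;> linarith)]
  set γ := (B - A) / (C - B)
  have hγ : γ * (C - B) = B - A := div_mul_cancel₀ _ (by linarith)
  calc Real.log ((x - B) / (x - A)) ≤ (x - B) / (x - A) - 1 :=
        Real.log_le_sub_one_of_pos (by apply div_pos <;> linarith)
    _ ≤ (γ - δ) * (1 - ((x - C) / (x - B))⁻¹) := by
        rw [div_sub_one (by linarith), inv_div, one_sub_div (by linarith), mul_div_assoc',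
          div_le_div_iff₀ (by linarith) (by linarith), show x - B - (x - A) = -(γ * (C - B)) by
            rw [hγ]; ring]
        nlinarith [mul_le_mul_of_nonneg_left hx (sub_nonneg.2 hBC.le)]
    _ ≤ (γ - δ) * Real.log ((x - C) / (x - B)) :=
        mul_le_mul_of_nonneg_left (Real.one_sub_inv_le_log_of_pos (by apply div_pos <;> linarith))
          (by linarith)

noncomputable def etakFactor (r : ℕ → ℝ) (k j : ℕ) : ℝ :=
  1 - (r (k + 1) - r k) / (r j - r k)

section etakFactor

variable {r : ℕ → ℝ} {k : ℕ}

lemma etak_sub_eq_prod_etakFactor (hr : r (k + 1) ≠ r k) {m i : ℕ} (hki : k ≤ i) (hkm : k < m) :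
    etak r k m (i - k) = ∏ j ∈ Ioc i m, etakFactor r k j := by
  rcases hki.eq_or_lt with rfl | hki
  · -- the convention `η_0 = 0` agrees with the product because its factor at `j = k + 1` is `0`
    rw [Nat.sub_self, etak, if_pos rfl]
    refine (prod_eq_zero (mem_Ioc.2 ⟨lt_add_one k, hkm⟩) ?_).symm
    rw [etakFactor, div_self (sub_ne_zero.2 hr), sub_self]
  · rw [etak, if_neg (by omega), Nat.sub_add_cancel hki.le]
    rfl

lemma etakFactor_mem_Icc (hr : StrictMono r) {j : ℕ} (hj : k < j) :
    etakFactor r k j ∈ Set.Icc (0 : ℝ) 1 := by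
  have hk : r k < r (k + 1) := hr (lt_add_one k)
  have hj : r (k + 1) ≤ r j := hr.monotone hj
  exact ⟨sub_nonneg.2 ((div_le_one (by linarith)).2 (by linarith)),
    sub_le_self _ (div_nonneg (by linarith) (by linarith))⟩

lemma tendsto_prod_etakFactor (h0 : r 0 = 0) (hr : StrictMono r)
    (hdiv : Tendsto (fun m => ∑ j ∈ Icc 1 m, 1 / r j) atTop atTop) {K : ℕ} (hK : k ≤ K) :
    Tendsto (fun m => ∏ j ∈ Ioc K m, etakFactor r k j) atTop (𝓝 0) := by
  have hc : 0 < r (k + 1) - r k := sub_pos.2 (hr (lt_add_one k))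
  have hrk : 0 ≤ r k := h0 ▸ hr.monotone (Nat.zero_le k)
  have hKj : ∀ {m j}, j ∈ Ioc K m → k < j := fun hj => hK.trans_lt (mem_Ioc.1 hj).1
  refine tendsto_prod_one_sub_nhds_zero
    (fun m j hj => sub_nonneg.1 (etakFactor_mem_Icc hr (hKj hj)).1) ?_
  refine tendsto_atTop_mono (fun m => ?_) ((tendsto_sum_Ioc_atTop hdiv K).const_mul_atTop hc)
  rw [mul_sum]
  refine sum_le_sum fun j hj => ?_
  rw [mul_one_div]
  exact div_le_div_of_nonneg_left hc.le (sub_pos.2 (hr (hKj hj))) (by linarith)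

lemma eventually_etakFactor_rpow_comparison (hr : StrictMono r) (hinf : Tendsto r atTop atTop) :
    ∀ δ ∈ Set.Ioo 0 ((r (k + 1) - r k) / (r (k + 2) - r (k + 1))), ∀ᶠ j in atTop,
      etakFactor r (k + 1) j ^ ((r (k + 1) - r k) / (r (k + 2) - r (k + 1)) + δ) ≤
          etakFactor r k j ∧
        etakFactor r k j ≤
          etakFactor r (k + 1) j ^ ((r (k + 1) - r k) / (r (k + 2) - r (k + 1)) - δ) := by
  intro δ ⟨hδ, hδγ⟩
  have hAB : r k < r (k + 1) := hr (lt_add_one k)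
  have hBC : r (k + 1) < r (k + 2) := hr (lt_add_one (k + 1))
  filter_upwards [hinf.eventually_gt_atTop (r (k + 2)), hinf.eventually_ge_atTop
    (r k + (r (k + 1) - r k) / (r (k + 2) - r (k + 1)) * (r (k + 2) - r k) / δ)] with j hCj hj
  have ha := etakFactor_mem_Icc (k := k + 1) hr ((lt_add_one _).trans (hr.lt_iff_lt.1 hCj))
  refine ⟨(Real.rpow_le_rpow_of_exponent_ge' ha.1 ha.2 (by positivity) (by linarith)).trans
    (one_sub_div_rpow_le hAB hBC hCj), one_sub_div_le_rpow hAB hBC hCj hδγ.le ?_⟩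
  change _ / (r (k + 2) - r (k + 1)) * (r (k + 2) - r k) ≤ _
  rw [← div_le_iff₀' hδ]
  linarith

end etakFactor

theorem etak_convergence (r : ℕ → ℝ) (h0 : r 0 = 0) (hmono : StrictMono r)
    (hinf : Tendsto r atTop atTop)
    (hdiv : Tendsto (fun m => ∑ j ∈ Finset.Icc 1 m, 1 / r j) atTop atTop)
    (k : ℕ) :
    ∀ ε > 0, ∃ M : ℕ, ∀ m ≥ M, ∀ i ≤ m,
      |etak r k m (i - k) -
          (etak r (k + 1) m (i - (k + 1))) ^
            ((r (k + 1) - r k) / (r (k + 2) - r (k + 1)))| < ε := by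
  intro ε hε
  have hγ : 0 < (r (k + 1) - r k) / (r (k + 2) - r (k + 1)) :=
    div_pos (sub_pos.2 (hmono (lt_add_one k))) (sub_pos.2 (hmono (lt_add_one (k + 1))))
  obtain ⟨M, hM⟩ := exists_abs_prod_sub_prod_rpow_lt (N := k + 1) hγ
    (fun j hj => etakFactor_mem_Icc hmono (by omega))
    (fun j hj => etakFactor_mem_Icc hmono (by omega))
    (eventually_etakFactor_rpow_comparison hmono hinf)
    (fun K hK => tendsto_prod_etakFactor h0 hmono hdiv hK)
    (fun K hK => tendsto_prod_etakFactor h0 hmono hdiv (by omega)) hε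
  refine ⟨max M (k + 2), fun m hm i _ => ?_⟩
  rcases le_or_gt i k with hik | hki
  · simpa [Nat.sub_eq_zero_of_le hik, Nat.sub_eq_zero_of_le (hik.trans (Nat.le_succ k)), etak,
      Real.zero_rpow hγ.ne'] using hε
  · rw [etak_sub_eq_prod_etakFactor (hmono (lt_add_one k)).ne' hki.le (by omega),
      etak_sub_eq_prod_etakFactor (hmono (lt_add_one (k + 1))).ne' hki (by omega)]
    exact hM m (le_of_max_le_left hm) i hki
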